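/- Let d ≥ 1, γ ∈ (1,∞), k ≥ 1, μ > 0, and let C₁ = (1 + (γ-1)^{-1}) 2^d. For weights w_i, w_j > 0, define the geometric connection probability p(w_i, w_j, x, y) = (1/(1+C₁)) · min(w_i w_j/(μ k ‖x - y‖^d), 1)^γ for x, y ∈ 𝕋^d. Then the average over independent uniform positions x_i, x_j on 𝕋^d satisfies: E[p(w_i, w_j, x_i, x_j)] = 1/(1+C₁) if w_i w_j/(μ k) ≥ 2^{-d}, and E[p(w_i, w_j, x_i, x_j)] = (C₁/(1+C₁)) · w_i w_j/(μ k) + O((w_i w_j 2^d/(μ k))^γ) otherwise; in particular in the latter case E[p(w_i, w_j, x_i, x_j)] = Θ(min(w_i w_j/(μ k), 1)). -/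

import Mathlib

open MeasureTheory ProbabilityTheory Filter Finset Asymptotics
open scoped Topology ENNReal NNReal Classical

noncomputable section

/-- The torus distance on `[0,1]^d`:
`‖x - y‖ = sup_i min (|x i - y i|) (1 - |x i - y i|)`. -/
def torusDist (d : ℕ) (x y : Fin d → ℝ) : ℝ :=
  ⨆ i : Fin d, min |x i - y i| (1 - |x i - y i|)

/-- The uniform probability measure on the cube `[0,1]^d`. -/
def unifCube (d : ℕ) : Measure (Fin d → ℝ) := volume.restrict (Set.Icc 0 1)

/-- The correction constant `C₁ = (1 + (γ-1)⁻¹) 2^d`. -/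
def C1 (d : ℕ) (γ : ℝ) : ℝ := (1 + (γ - 1)⁻¹) * 2 ^ d

/-- The geometric (GIRG) connection probability
`min (w_i w_j / (μ k ‖x-y‖^d)) 1 ^ γ` (without the correction factor). -/
def pGIRG (k d : ℕ) (γ μ wi wj : ℝ) (x y : Fin d → ℝ) : ℝ :=
  (min (wi * wj / (μ * k * torusDist d x y ^ d)) 1) ^ γ

namespace MCPaux

open Set

/-- one-dimensional torus quasi-distance -/
def tm (s t : ℝ) : ℝ := min |s - t| (1 - |s - t|)

lemma torusDist_eq (d : ℕ) (x y : Fin d → ℝ) :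
    torusDist d x y = ⨆ i, tm (x i) (y i) := rfl

lemma tm_le_half (s t : ℝ) : tm s t ≤ 1 / 2 := by
  rcases le_or_gt |s - t| (1 / 2) with h | h
  · exact (min_le_left _ _).trans h
  · exact (min_le_right _ _).trans (by linarith)

lemma tm_nonneg {s t : ℝ} (hs : s ∈ Icc (0:ℝ) 1) (ht : t ∈ Icc (0:ℝ) 1) :
    0 ≤ tm s t := by
  have : |s - t| ≤ 1 := by
    rw [abs_le]; constructor
    · linarith [hs.1, ht.2]
    · linarith [hs.2, ht.1]
  exact le_min (abs_nonneg _) (by linarith)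

lemma torusDist_le_half {d : ℕ} (hd : 0 < d) (x y : Fin d → ℝ) :
    torusDist d x y ≤ 1 / 2 := by
  haveI : Nonempty (Fin d) := ⟨⟨0, hd⟩⟩
  exact ciSup_le fun i => tm_le_half _ _

lemma tm_le_torusDist {d : ℕ} (x y : Fin d → ℝ) (i : Fin d) :
    tm (x i) (y i) ≤ torusDist d x y := by
  rw [torusDist_eq]
  exact le_ciSup (f := fun i => tm (x i) (y i)) (Set.Finite.bddAbove (Set.finite_range _)) i

lemma torusDist_nonneg {d : ℕ} (hd : 0 < d) {x y : Fin d → ℝ}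
    (hx : x ∈ Icc (0:Fin d → ℝ) 1) (hy : y ∈ Icc (0:Fin d → ℝ) 1) :
    0 ≤ torusDist d x y := by
  set i0 : Fin d := ⟨0, hd⟩
  exact le_trans (tm_nonneg ⟨hx.1 i0, hx.2 i0⟩ ⟨hy.1 i0, hy.2 i0⟩) (tm_le_torusDist x y i0)

lemma torusDist_lt_iff {d : ℕ} (hd : 0 < d) (x y : Fin d → ℝ) {ρ : ℝ} :
    torusDist d x y < ρ ↔ ∀ i, tm (x i) (y i) < ρ := by
  haveI : Nonempty (Fin d) := ⟨⟨0, hd⟩⟩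
  constructor
  · intro h i; exact lt_of_le_of_lt (tm_le_torusDist x y i) h
  · intro h
    obtain ⟨i, hi⟩ := exists_eq_ciSup_of_finite (f := fun i => tm (x i) (y i))
    rw [torusDist_eq, ← hi]
    exact h i

lemma measurable_td (d : ℕ) :
    Measurable (fun z : (Fin d → ℝ) × (Fin d → ℝ) => torusDist d z.1 z.2) := by
  apply Measurable.iSup
  intro i
  have h1 : Continuous fun z : (Fin d → ℝ) × (Fin d → ℝ) => |z.1 i - z.2 i| :=
    (((continuous_apply i).comp continuous_fst).sub
      ((continuous_apply i).comp continuous_snd)).abs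
  exact (h1.min (continuous_const.sub h1)).measurable

/-- 1-D measure computation: the torus ball of radius `r` has measure `2r`. -/
lemma volume_tm_lt {s r : ℝ} (hs : s ∈ Icc (0:ℝ) 1) (hr0 : 0 < r) (hr : r < 1/2) :
    volume.restrict (Icc (0:ℝ) 1) {t | tm s t < r} = ENNReal.ofReal (2 * r) := by
  obtain ⟨hs0, hs1⟩ := hs
  rw [Measure.restrict_apply' measurableSet_Icc]
  have hiff : ∀ t, tm s t < r ↔ (|s - t| < r ∨ 1 - r < |s - t|) := by
    intro t; rw [tm, min_lt_iff]
    constructor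
    · rintro (h | h)
      · exact Or.inl h
      · exact Or.inr (by linarith)
    · rintro (h | h)
      · exact Or.inl h
      · exact Or.inr (by linarith)
  rcases lt_or_ge s r with hcase | hcase
  · -- s < r
    have hset : {t | tm s t < r} ∩ Icc 0 1 = Ico 0 (s + r) ∪ Ioc (s + 1 - r) 1 := by
      ext t
      simp only [Set.mem_inter_iff, Set.mem_setOf_eq, Set.mem_Icc, Set.mem_union, Set.mem_Ico, Set.mem_Ioc, hiff]
      constructor
      · rintro ⟨h | h, ht0, ht1⟩
        · rw [abs_lt] at h
          exact Or.inl ⟨ht0, by linarith [h.1]⟩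
        · rw [lt_abs] at h
          rcases h with h | h
          · exfalso; linarith
          · exact Or.inr ⟨by linarith, ht1⟩
      · rintro (⟨ht0, ht⟩ | ⟨ht, ht1⟩)
        · refine ⟨Or.inl ?_, ht0, by linarith⟩
          rw [abs_lt]; constructor <;> linarith
        · refine ⟨Or.inr ?_, by linarith, ht1⟩
          rw [lt_abs]; right; linarith
    rw [hset, measure_union ?_ measurableSet_Ioc]
    · rw [Real.volume_Ico, Real.volume_Ioc,
        ← ENNReal.ofReal_add (by linarith) (by linarith)]
      congr 1; ring
    · rw [Set.disjoint_left]
      rintro t ⟨_, h1⟩ ⟨h2, _⟩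
      linarith
  rcases le_or_gt s (1 - r) with hcase2 | hcase2
  · -- r ≤ s ≤ 1 - r
    have hset : {t | tm s t < r} ∩ Icc 0 1 = Ioo (s - r) (s + r) := by
      ext t
      simp only [Set.mem_inter_iff, Set.mem_setOf_eq, Set.mem_Icc, Set.mem_Ioo, hiff]
      constructor
      · rintro ⟨h | h, ht0, ht1⟩
        · rw [abs_lt] at h
          exact ⟨by linarith [h.2], by linarith [h.1]⟩
        · rw [lt_abs] at h
          rcases h with h | h
          · exfalso; linarith
          · exfalso; linarith
      · rintro ⟨h1, h2⟩
        refine ⟨Or.inl ?_, by linarith, by linarith⟩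
        rw [abs_lt]; constructor <;> linarith
    rw [hset, Real.volume_Ioo]
    congr 1; ring
  · -- 1 - r < s
    have hset : {t | tm s t < r} ∩ Icc 0 1 = Ico 0 (s - (1 - r)) ∪ Ioc (s - r) 1 := by
      ext t
      simp only [Set.mem_inter_iff, Set.mem_setOf_eq, Set.mem_Icc, Set.mem_union, Set.mem_Ico, Set.mem_Ioc, hiff]
      constructor
      · rintro ⟨h | h, ht0, ht1⟩
        · rw [abs_lt] at h
          exact Or.inr ⟨by linarith [h.2], ht1⟩
        · rw [lt_abs] at h
          rcases h with h | h
          · exact Or.inl ⟨ht0, by linarith⟩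
          · exfalso; linarith
      · rintro (⟨ht0, ht⟩ | ⟨ht, ht1⟩)
        · refine ⟨Or.inr ?_, ht0, by linarith⟩
          rw [lt_abs]; left; linarith
        · refine ⟨Or.inl ?_, by linarith, ht1⟩
          rw [abs_lt]; constructor <;> linarith
    rw [hset, measure_union ?_ measurableSet_Ioc]
    · rw [Real.volume_Ico, Real.volume_Ioc,
        ← ENNReal.ofReal_add (by linarith) (by linarith)]
      congr 1; ring
    · rw [Set.disjoint_left]
      rintro t ⟨_, h1⟩ ⟨h2, _⟩
      linarith

lemma unifCube_eq_pi (d : ℕ) :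
    unifCube d = Measure.pi (fun _ : Fin d => volume.restrict (Icc (0:ℝ) 1)) := by
  refine ((Measure.pi_eq (μ := fun _ : Fin d => volume.restrict (Icc (0:ℝ) 1)) fun s hs => ?_)).symm
  rw [unifCube, ← Set.pi_univ_Icc, Measure.restrict_apply (MeasurableSet.univ_pi hs),
    ← Set.pi_inter_distrib, volume_pi, Measure.pi_pi]
  refine Finset.prod_congr rfl fun i _ => ?_
  rw [Measure.restrict_apply (hs i), Pi.zero_apply, Pi.one_apply]

instance : IsProbabilityMeasure (volume.restrict (Icc (0:ℝ) 1)) := by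
  constructor
  rw [Measure.restrict_apply_univ, Real.volume_Icc]
  norm_num

instance (d : ℕ) : IsProbabilityMeasure (unifCube d) := by
  rw [unifCube_eq_pi]; infer_instance

lemma measurable_tm_lt (s ρ : ℝ) : MeasurableSet {t : ℝ | tm s t < ρ} := by
  have h1 : Continuous fun t : ℝ => |s - t| := (continuous_const.sub continuous_id).abs
  exact measurableSet_lt (h1.min (continuous_const.sub h1)).measurable measurable_const

lemma unifCube_slice {d : ℕ} (hd : 0 < d) {x : Fin d → ℝ}
    (hx : x ∈ Icc (0:Fin d → ℝ) 1) {ρ : ℝ} (h0 : 0 < ρ) (hρ : ρ < 1/2) :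
    unifCube d {y | torusDist d x y < ρ} = ENNReal.ofReal (2 * ρ) ^ d := by
  have hset : {y : Fin d → ℝ | torusDist d x y < ρ}
      = Set.pi Set.univ (fun i => {t | tm (x i) t < ρ}) := by
    ext y
    simp only [Set.mem_setOf_eq, Set.mem_pi, Set.mem_univ, true_implies]
    exact torusDist_lt_iff hd x y
  rw [unifCube_eq_pi, hset, Measure.pi_pi]
  rw [Finset.prod_congr rfl (fun i _ => volume_tm_lt ⟨hx.1 i, hx.2 i⟩ h0 hρ),
    Finset.prod_const, Finset.card_univ, Fintype.card_fin]

lemma unifCube_eval_null {d : ℕ} (i : Fin d) (cst : ℝ) :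
    unifCube d {y : Fin d → ℝ | y i = cst} = 0 := by
  refine le_antisymm ?_ zero_le
  calc unifCube d {y : Fin d → ℝ | y i = cst}
      ≤ volume {y : Fin d → ℝ | y i = cst} := Measure.restrict_le_self _
    _ = 0 := by rw [volume_pi]; exact Measure.pi_hyperplane (fun _ : Fin d => (volume : Measure ℝ)) i cst

lemma unifCube_triple_null {d : ℕ} (i : Fin d) (b1 b2 b3 : ℝ) :
    unifCube d {y : Fin d → ℝ | y i = b1 ∨ y i = b2 ∨ y i = b3} = 0 := by
  have : {y : Fin d → ℝ | y i = b1 ∨ y i = b2 ∨ y i = b3}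
      = {y : Fin d → ℝ | y i = b1} ∪ ({y | y i = b2} ∪ {y | y i = b3}) := by
    ext y; simp [Set.mem_setOf_eq, or_assoc]
  rw [this]
  exact measure_union_null (unifCube_eval_null i b1)
    (measure_union_null (unifCube_eval_null i b2) (unifCube_eval_null i b3))

lemma tm_eq_zero_cases {s t : ℝ} (h : tm s t = 0) :
    t = s ∨ t = s - 1 ∨ t = s + 1 := by
  unfold tm at h
  have h' : |s - t| = 0 ∨ |s - t| = 1 := by
    rcases min_choice |s - t| (1 - |s - t|) with hm | hm <;> rw [hm] at h
    · exact Or.inl h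
    · right; linarith
  rcases h' with h' | h'
  · left; have := abs_eq_zero.1 h'; linarith
  · rcases (abs_eq (by norm_num : (0:ℝ) ≤ 1)).1 h' with h2 | h2
    · right; left; linarith
    · right; right; linarith

end MCPaux

set_option maxHeartbeats 1000000 in
/-- Lemma B.1: the connection probability of two community vertices, averaged over their
independent uniform positions on the torus.  If `w_i w_j/(μ k) ≥ 2^(-d)` it equals
`(1 + C₁)⁻¹`; otherwise it equals `C₁/(1+C₁) · w_i w_j/(μ k)` up to an error
`O((w_i w_j 2^d/(μ k))^γ)`, with a constant depending only on `d` and `γ`. -/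
theorem marginal_connection_probability
    (d : ℕ) (hd : 1 ≤ d) (γ : ℝ) (hγ : 1 < γ) :
    ∃ K > (0:ℝ), ∀ (k : ℕ), 1 ≤ k → ∀ (μ wi wj : ℝ), 0 < μ → 0 < wi → 0 < wj →
      ((((2:ℝ) ^ d)⁻¹ ≤ wi * wj / (μ * k) →
        (∫ x, (∫ y, (1 + C1 d γ)⁻¹ * pGIRG k d γ μ wi wj x y ∂(unifCube d)) ∂(unifCube d))
          = (1 + C1 d γ)⁻¹) ∧
       (wi * wj / (μ * k) < ((2:ℝ) ^ d)⁻¹ →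
        |(∫ x, (∫ y, (1 + C1 d γ)⁻¹ * pGIRG k d γ μ wi wj x y ∂(unifCube d)) ∂(unifCube d))
            - C1 d γ / (1 + C1 d γ) * (wi * wj / (μ * k))|
          ≤ K * (wi * wj * 2 ^ d / (μ * k)) ^ γ)) := by
  classical
  have hd0 : 0 < d := hd
  haveI : Nonempty (Fin d) := ⟨⟨0, hd0⟩⟩
  set i0 : Fin d := ⟨0, hd0⟩ with hi0
  have hγ0 : (0:ℝ) < γ := by linarith
  have hγm1 : (0:ℝ) < γ - 1 := by linarith
  have hγne : γ ≠ 0 := ne_of_gt hγ0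
  have hinv1 : γ⁻¹ < 1 := by rw [← one_div]; exact (div_lt_one hγ0).2 hγ
  refine ⟨(γ - 1)⁻¹, inv_pos.2 hγm1, ?_⟩
  intro k hk μ wi wj hμ hwi hwj
  have hk0 : (0:ℝ) < (k:ℝ) := by
    have : (1:ℝ) ≤ (k:ℝ) := by exact_mod_cast hk
    linarith
  have h2d : (0:ℝ) < 2 ^ d := by positivity
  have hC1 : 0 < C1 d γ := by
    have h1 : 0 < (γ - 1)⁻¹ := inv_pos.2 hγm1
    exact mul_pos (by linarith) h2d
  have hκ0 : 0 < (1 + C1 d γ)⁻¹ := inv_pos.2 (by linarith)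
  have hκ1 : (1 + C1 d γ)⁻¹ ≤ 1 := by
    rw [← one_div]
    exact (div_le_one (by linarith)).2 (by linarith)
  set c : ℝ := wi * wj / (μ * (k:ℝ)) with hc
  have hc0 : 0 < c := by rw [hc]; positivity
  set C2 : Set ((Fin d → ℝ) × (Fin d → ℝ)) := (Set.Icc 0 1) ×ˢ (Set.Icc 0 1) with hC2
  have hC2m : MeasurableSet C2 := measurableSet_Icc.prod measurableSet_Icc
  set P : Measure ((Fin d → ℝ) × (Fin d → ℝ)) := (unifCube d).prod (unifCube d) with hP
  haveI : IsProbabilityMeasure P := by rw [hP]; infer_instance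
  have hPr : P = ((volume : Measure (Fin d → ℝ)).prod volume).restrict C2 := by
    rw [hP, hC2, unifCube, Measure.prod_restrict]
  have hPapp : ∀ S : Set ((Fin d → ℝ) × (Fin d → ℝ)),
      P S = ((volume : Measure (Fin d → ℝ)).prod volume) (S ∩ C2) := fun S => by
    rw [hPr, Measure.restrict_apply' hC2m]
  have hRm : Measurable (fun z : (Fin d → ℝ) × (Fin d → ℝ) => torusDist d z.1 z.2) :=
    MCPaux.measurable_td d
  have hR0 : ∀ z ∈ C2, 0 ≤ torusDist d z.1 z.2 := fun z hz =>
    MCPaux.torusDist_nonneg hd0 hz.1 hz.2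
  have hRhalf : ∀ z : (Fin d → ℝ) × (Fin d → ℝ), torusDist d z.1 z.2 ≤ 1/2 :=
    fun z => MCPaux.torusDist_le_half hd0 z.1 z.2
  have hFdef : ∀ x y : Fin d → ℝ,
      pGIRG k d γ μ wi wj x y = min (c / torusDist d x y ^ d) 1 ^ γ := by
    intro x y; rw [pGIRG, hc, div_div]
  have hm0 : ∀ z ∈ C2, 0 ≤ min (c / torusDist d z.1 z.2 ^ d) 1 := fun z hz =>
    le_min (div_nonneg hc0.le (pow_nonneg (hR0 z hz) d)) zero_le_one
  have hF01 : ∀ z ∈ C2, 0 ≤ pGIRG k d γ μ wi wj z.1 z.2 ∧ pGIRG k d γ μ wi wj z.1 z.2 ≤ 1 := by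
    intro z hz
    rw [hFdef z.1 z.2]
    exact ⟨Real.rpow_nonneg (hm0 z hz) γ,
      Real.rpow_le_one (hm0 z hz) (min_le_right _ _) hγ0.le⟩
  set N : Set ((Fin d → ℝ) × (Fin d → ℝ)) :=
    {z | z.2 i0 = z.1 i0 ∨ z.2 i0 = z.1 i0 - 1 ∨ z.2 i0 = z.1 i0 + 1} with hN
  have hNm : MeasurableSet N := by
    have h1 : Measurable fun z : (Fin d → ℝ) × (Fin d → ℝ) => z.1 i0 :=
      (measurable_pi_apply i0).comp measurable_fst
    have h2 : Measurable fun z : (Fin d → ℝ) × (Fin d → ℝ) => z.2 i0 :=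
      (measurable_pi_apply i0).comp measurable_snd
    have he : N = {z : (Fin d → ℝ) × (Fin d → ℝ) | z.2 i0 = z.1 i0}
        ∪ ({z | z.2 i0 = z.1 i0 - 1} ∪ {z | z.2 i0 = z.1 i0 + 1}) := by
      ext z; simp [hN, Set.mem_setOf_eq, or_assoc]
    rw [he]
    exact (measurableSet_eq_fun h2 h1).union
      ((measurableSet_eq_fun h2 (h1.sub measurable_const)).union
        (measurableSet_eq_fun h2 (h1.add measurable_const)))
  have hN0 : P N = 0 := by
    rw [hP, Measure.prod_apply hNm]
    have hz : ∀ x : Fin d → ℝ, unifCube d (Prod.mk x ⁻¹' N) = 0 := by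
      intro x
      have he : Prod.mk x ⁻¹' N
          = {y : Fin d → ℝ | y i0 = x i0 ∨ y i0 = x i0 - 1 ∨ y i0 = x i0 + 1} := rfl
      rw [he]
      exact MCPaux.unifCube_triple_null i0 _ _ _
    simp [hz]
  have hkey : ∀ z ∈ C2, z ∉ N → 0 < torusDist d z.1 z.2 := by
    intro z hz hzN
    have h0 : 0 ≤ MCPaux.tm (z.1 i0) (z.2 i0) :=
      MCPaux.tm_nonneg ⟨hz.1.1 i0, hz.1.2 i0⟩ ⟨hz.2.1 i0, hz.2.2 i0⟩
    have hne : MCPaux.tm (z.1 i0) (z.2 i0) ≠ 0 := fun h => hzN (MCPaux.tm_eq_zero_cases h)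
    exact lt_of_lt_of_le (h0.lt_of_ne (Ne.symm hne)) (MCPaux.tm_le_torusDist z.1 z.2 i0)
  constructor
  · -- Case 1
    intro hge
    have haeIcc : ∀ᵐ x ∂(unifCube d), x ∈ Set.Icc (0:Fin d → ℝ) 1 :=
      ae_restrict_mem measurableSet_Icc
    have hinner : ∀ x ∈ Set.Icc (0:Fin d → ℝ) 1,
        (∫ y, (1 + C1 d γ)⁻¹ * pGIRG k d γ μ wi wj x y ∂(unifCube d)) = (1 + C1 d γ)⁻¹ := by
      intro x hx
      have hae2 : ∀ᵐ y ∂(unifCube d),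
          (1 + C1 d γ)⁻¹ * pGIRG k d γ μ wi wj x y = (1 + C1 d γ)⁻¹ := by
        have h1 : ∀ᵐ y ∂(unifCube d), y ∈ Set.Icc (0:Fin d → ℝ) 1 :=
          ae_restrict_mem measurableSet_Icc
        have h2 : ∀ᵐ y ∂(unifCube d),
            y ∉ {y : Fin d → ℝ | y i0 = x i0 ∨ y i0 = x i0 - 1 ∨ y i0 = x i0 + 1} :=
          measure_eq_zero_iff_ae_notMem.1 (MCPaux.unifCube_triple_null i0 _ _ _)
        filter_upwards [h1, h2] with y hy hyN
        have hzC : ((x, y) : (Fin d → ℝ) × (Fin d → ℝ)) ∈ C2 := ⟨hx, hy⟩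
        have hzN : ((x, y) : (Fin d → ℝ) × (Fin d → ℝ)) ∉ N := hyN
        have hRpos : 0 < torusDist d x y := hkey (x, y) hzC hzN
        have hone : (1:ℝ) ≤ c / torusDist d x y ^ d := by
          rw [le_div_iff₀ (pow_pos hRpos d)]
          have h3 : torusDist d x y ^ d ≤ (1/2:ℝ) ^ d :=
            pow_le_pow_left₀ (hR0 (x, y) hzC) (hRhalf (x, y)) d
          have h4 : ((1:ℝ)/2) ^ d = ((2:ℝ) ^ d)⁻¹ := by
            rw [div_pow, one_pow, one_div]
          calc 1 * torusDist d x y ^ d = torusDist d x y ^ d := one_mul _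
            _ ≤ ((2:ℝ) ^ d)⁻¹ := by rw [← h4]; exact h3
            _ ≤ c := hge
        rw [hFdef x y, min_eq_right hone, Real.one_rpow, mul_one]
      rw [integral_congr_ae hae2, integral_const, probReal_univ, one_smul]
    have houter : (fun x => ∫ y, (1 + C1 d γ)⁻¹ * pGIRG k d γ μ wi wj x y ∂(unifCube d))
        =ᵐ[unifCube d] fun _ => (1 + C1 d γ)⁻¹ :=
      haeIcc.mono fun x hx => hinner x hx
    rw [integral_congr_ae houter, integral_const, probReal_univ, one_smul]
  · -- Case 2
    intro hlt
    set a : ℝ := 2 ^ d * c with ha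
    have ha0 : 0 < a := by rw [ha]; positivity
    have ha1 : a < 1 := by
      rw [ha]
      calc (2:ℝ) ^ d * c < 2 ^ d * ((2:ℝ) ^ d)⁻¹ := mul_lt_mul_of_pos_left hlt h2d
        _ = 1 := mul_inv_cancel₀ (ne_of_gt h2d)
    set A : ℝ := a ^ γ with hA
    have hA0 : 0 < A := Real.rpow_pos_of_pos ha0 γ
    have hA1 : A < 1 := Real.rpow_lt_one ha0.le ha1 hγ0
    have hFm : Measurable (fun z : (Fin d → ℝ) × (Fin d → ℝ) => pGIRG k d γ μ wi wj z.1 z.2) := by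
      have h1 : Measurable fun z : (Fin d → ℝ) × (Fin d → ℝ) =>
          min (c / torusDist d z.1 z.2 ^ d) 1 :=
        (measurable_const.div (hRm.pow_const d)).min measurable_const
      have h2 := (Real.continuous_rpow_const hγ0.le).measurable.comp h1
      simpa [hFdef, Function.comp_def] using h2
    have haeC2 : ∀ᵐ z ∂P, z ∈ C2 := by rw [hPr]; exact ae_restrict_mem hC2m
    have hFnn : 0 ≤ᵐ[P] fun z : (Fin d → ℝ) × (Fin d → ℝ) => pGIRG k d γ μ wi wj z.1 z.2 :=
      haeC2.mono fun z hz => (hF01 z hz).1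
    have hFint : Integrable (fun z : (Fin d → ℝ) × (Fin d → ℝ) =>
        pGIRG k d γ μ wi wj z.1 z.2) P := by
      refine Integrable.mono' (integrable_const 1) hFm.aestronglyMeasurable ?_
      filter_upwards [haeC2] with z hz
      rw [Real.norm_eq_abs, abs_of_nonneg (hF01 z hz).1]
      exact (hF01 z hz).2
    have hFint' : Integrable (Function.uncurry fun x y => pGIRG k d γ μ wi wj x y)
        ((unifCube d).prod (unifCube d)) := by
      have h := hFint; rw [hP] at h; exact h
    have hLHS : (∫ x, (∫ y, (1 + C1 d γ)⁻¹ * pGIRG k d γ μ wi wj x y ∂(unifCube d)) ∂(unifCube d))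
        = (1 + C1 d γ)⁻¹ * ∫ z, pGIRG k d γ μ wi wj z.1 z.2 ∂P := by
      simp_rw [MeasureTheory.integral_const_mul]
      rw [MeasureTheory.integral_integral hFint', hP]
    have hlayer : ∫ z, pGIRG k d γ μ wi wj z.1 z.2 ∂P
        = ∫ t in Set.Ioi (0:ℝ), (P {z | t < pGIRG k d γ μ wi wj z.1 z.2}).toReal :=
      hFint.integral_eq_integral_meas_lt hFnn
    have hiff : ∀ t : ℝ, 0 < t → t < 1 → ∀ z ∈ C2,
        (t < pGIRG k d γ μ wi wj z.1 z.2 ↔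
          (0 < torusDist d z.1 z.2 ∧ torusDist d z.1 z.2 ^ d < c / t ^ γ⁻¹)) := by
      intro t ht0 ht1 z hz
      have hb0 : 0 < t ^ γ⁻¹ := Real.rpow_pos_of_pos ht0 _
      have hb1 : t ^ γ⁻¹ < 1 := Real.rpow_lt_one ht0.le ht1 (by positivity)
      rw [hFdef z.1 z.2, ← Real.rpow_inv_lt_iff_of_pos ht0.le (hm0 z hz) hγ0, lt_min_iff]
      constructor
      · rintro ⟨h1, -⟩
        have hRpos : 0 < torusDist d z.1 z.2 := by
          rcases (hR0 z hz).lt_or_eq with h | h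
          · exact h
          · exfalso
            have hz0 : c / torusDist d z.1 z.2 ^ d = 0 := by
              rw [← h, zero_pow hd0.ne', div_zero]
            rw [hz0] at h1; linarith
        refine ⟨hRpos, ?_⟩
        have hRd : 0 < torusDist d z.1 z.2 ^ d := pow_pos hRpos d
        rw [lt_div_iff₀ hRd] at h1
        rw [lt_div_iff₀ hb0, mul_comm]
        exact h1
      · rintro ⟨hRpos, h1⟩
        have hRd : 0 < torusDist d z.1 z.2 ^ d := pow_pos hRpos d
        refine ⟨?_, hb1⟩
        rw [lt_div_iff₀ hb0] at h1
        rw [lt_div_iff₀ hRd, mul_comm]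
        exact h1
    have hsq : ∀ S B : Set ((Fin d → ℝ) × (Fin d → ℝ)),
        (S ∩ C2 ⊆ B) → (∀ z ∈ C2, z ∈ B → z ∈ S ∨ z ∈ N) → P S = P B := by
      intro S B h1 h2
      apply le_antisymm
      · rw [hPapp S, hPapp B]
        exact measure_mono fun z hz => ⟨h1 hz, hz.2⟩
      · rw [hPapp B, hPapp S]
        refine le_trans (measure_mono ?_)
          (le_trans (measure_union_le (S ∩ C2) (N ∩ C2)) ?_)
        · rintro z ⟨hzB, hzC⟩
          rcases h2 z hzC hzB with h | h
          exacts [Or.inl ⟨h, hzC⟩, Or.inr ⟨h, hzC⟩]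
        · rw [← hPapp S, ← hPapp N, hN0, add_zero]
    have hball : ∀ ρ : ℝ, 0 < ρ → ρ < 1/2 →
        P {z : (Fin d → ℝ) × (Fin d → ℝ) | torusDist d z.1 z.2 < ρ}
          = ENNReal.ofReal (2 * ρ) ^ d := by
      intro ρ h0 hρ
      have hms : MeasurableSet {z : (Fin d → ℝ) × (Fin d → ℝ) | torusDist d z.1 z.2 < ρ} :=
        measurableSet_lt hRm measurable_const
      rw [hP, Measure.prod_apply hms]
      have hcongr : ∀ᵐ x ∂(unifCube d),
          unifCube d (Prod.mk x ⁻¹' {z : (Fin d → ℝ) × (Fin d → ℝ) | torusDist d z.1 z.2 < ρ})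
            = ENNReal.ofReal (2 * ρ) ^ d := by
        have haeI : ∀ᵐ x ∂(unifCube d), x ∈ Set.Icc (0:Fin d → ℝ) 1 :=
          ae_restrict_mem measurableSet_Icc
        filter_upwards [haeI] with x hx
        have he : Prod.mk x ⁻¹' {z : (Fin d → ℝ) × (Fin d → ℝ) | torusDist d z.1 z.2 < ρ}
            = {y : Fin d → ℝ | torusDist d x y < ρ} := rfl
        rw [he, MCPaux.unifCube_slice hd0 hx h0 hρ]
      rw [lintegral_congr_ae hcongr, lintegral_const, measure_univ, mul_one]
    have hval : ∀ t : ℝ, 0 < t → t ≠ A → t ≠ 1 →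
        (P {z | t < pGIRG k d γ μ wi wj z.1 z.2}).toReal
          = if t ≤ A then 1 else if t ≤ 1 then a * t ^ (-γ⁻¹) else 0 := by
      intro t ht0 htA ht1
      rcases lt_or_ge t 1 with htlt1 | htge1
      · have hb0 : 0 < t ^ γ⁻¹ := Real.rpow_pos_of_pos ht0 _
        rcases lt_or_ge t A with htA' | htA''
        · rw [if_pos htA'.le]
          have hba : t ^ γ⁻¹ < a := by
            have h := Real.rpow_lt_rpow ht0.le htA' (inv_pos.2 hγ0)
            rwa [hA, Real.rpow_rpow_inv ha0.le hγne] at h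
          have hset : P {z | t < pGIRG k d γ μ wi wj z.1 z.2} = P Set.univ := by
            apply hsq
            · intro z _; trivial
            · intro z hz _
              by_cases hzN : z ∈ N
              · exact Or.inr hzN
              · left
                rw [Set.mem_setOf_eq, hiff t ht0 htlt1 z hz]
                refine ⟨hkey z hz hzN, ?_⟩
                have h1 : torusDist d z.1 z.2 ^ d ≤ ((2:ℝ)^d)⁻¹ := by
                  calc torusDist d z.1 z.2 ^ d ≤ (1/2:ℝ) ^ d :=
                        pow_le_pow_left₀ (hR0 z hz) (hRhalf z) d
                    _ = ((2:ℝ)^d)⁻¹ := by rw [div_pow, one_pow, one_div]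
                have h2 : ((2:ℝ)^d)⁻¹ < c / t ^ γ⁻¹ := by
                  rw [lt_div_iff₀ hb0]
                  calc ((2:ℝ)^d)⁻¹ * t ^ γ⁻¹ < ((2:ℝ)^d)⁻¹ * a :=
                        mul_lt_mul_of_pos_left hba (inv_pos.2 h2d)
                    _ = c := by rw [ha, inv_mul_cancel_left₀ (ne_of_gt h2d)]
                linarith
          rw [hset, measure_univ, ENNReal.toReal_one]
        · have htA2 : A < t := htA''.lt_of_ne (fun h => htA h.symm)
          rw [if_neg (not_le.2 htA2), if_pos htlt1.le]
          have hba : a < t ^ γ⁻¹ := by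
            have h := Real.rpow_lt_rpow hA0.le htA2 (inv_pos.2 hγ0)
            rwa [hA, Real.rpow_rpow_inv ha0.le hγne] at h
          have hcb0 : 0 < c / t ^ γ⁻¹ := div_pos hc0 hb0
          set ρ : ℝ := (c / t ^ γ⁻¹) ^ ((d:ℝ)⁻¹) with hρdef
          have hρ0 : 0 < ρ := Real.rpow_pos_of_pos hcb0 _
          have hρd : ρ ^ d = c / t ^ γ⁻¹ := Real.rpow_inv_natCast_pow hcb0.le hd0.ne'
          have hρhalf : ρ < 1/2 := by
            have h1 : ρ ^ d < (1/2:ℝ) ^ d := by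
              rw [hρd, show ((1:ℝ)/2) ^ d = ((2:ℝ)^d)⁻¹ by rw [div_pow, one_pow, one_div]]
              rw [div_lt_iff₀ hb0]
              calc c = ((2:ℝ)^d)⁻¹ * a := by rw [ha, inv_mul_cancel_left₀ (ne_of_gt h2d)]
                _ < ((2:ℝ)^d)⁻¹ * t ^ γ⁻¹ := mul_lt_mul_of_pos_left hba (inv_pos.2 h2d)
            exact lt_of_pow_lt_pow_left₀ d (by norm_num) h1
          have hPval : P {z | t < pGIRG k d γ μ wi wj z.1 z.2}
              = P {z | torusDist d z.1 z.2 < ρ} := by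
            apply hsq
            · rintro z ⟨hzS, hzC⟩
              rw [Set.mem_setOf_eq] at hzS ⊢
              rw [hiff t ht0 htlt1 z hzC] at hzS
              have h := hzS.2
              rw [← hρd] at h
              exact lt_of_pow_lt_pow_left₀ d hρ0.le h
            · intro z hz hzB
              by_cases hzN : z ∈ N
              · exact Or.inr hzN
              · left
                rw [Set.mem_setOf_eq] at hzB ⊢
                rw [hiff t ht0 htlt1 z hz]
                refine ⟨hkey z hz hzN, ?_⟩
                rw [← hρd]
                exact pow_lt_pow_left₀ hzB (hR0 z hz) hd0.ne'
          rw [hPval, hball ρ hρ0 hρhalf, ENNReal.toReal_pow,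
            ENNReal.toReal_ofReal (by linarith)]
          have he : (2*ρ)^d = a / t ^ γ⁻¹ := by
            rw [mul_pow, hρd, ha]; ring
          rw [he, Real.rpow_neg ht0.le, div_eq_mul_inv]
      · have ht1' : 1 < t := htge1.lt_of_ne (fun h => ht1 h.symm)
        rw [if_neg (by linarith), if_neg (by linarith)]
        have hzero : P {z | t < pGIRG k d γ μ wi wj z.1 z.2} = 0 := by
          rw [hPapp]
          have he : {z | t < pGIRG k d γ μ wi wj z.1 z.2} ∩ C2 = ∅ := by
            ext z
            simp only [Set.mem_inter_iff, Set.mem_setOf_eq, Set.mem_empty_iff_false,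
              iff_false, not_and]
            intro hzS hzC
            have h := (hF01 z hzC).2
            linarith
          rw [he, measure_empty]
        rw [hzero, ENNReal.toReal_zero]
    set g : ℝ → ℝ := fun t => if t ≤ A then 1 else if t ≤ 1 then a * t ^ (-γ⁻¹) else 0 with hg
    have hcongrg : ∫ t in Set.Ioi (0:ℝ), (P {z | t < pGIRG k d γ μ wi wj z.1 z.2}).toReal
        = ∫ t in Set.Ioi (0:ℝ), g t := by
      apply setIntegral_congr_ae measurableSet_Ioi
      have h1 : ∀ᵐ t : ℝ ∂volume, t ≠ A :=
        (measure_eq_zero_iff_ae_notMem.1 (measure_singleton A)).mono fun t ht => by simpa using ht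
      have h2 : ∀ᵐ t : ℝ ∂volume, t ≠ (1:ℝ) :=
        (measure_eq_zero_iff_ae_notMem.1 (measure_singleton 1)).mono fun t ht => by simpa using ht
      filter_upwards [h1, h2] with t htA ht1
      intro htpos
      simp only [hg]
      exact hval t htpos htA ht1
    have hIoc1 : IntegrableOn g (Set.Ioc 0 A) volume := by
      have hconst : IntegrableOn (fun _ : ℝ => (1:ℝ)) (Set.Ioc 0 A) volume :=
        integrableOn_const (by rw [Real.volume_Ioc]; exact ENNReal.ofReal_ne_top)
      exact hconst.congr_fun (fun t ht => by simp only [hg]; rw [if_pos ht.2])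
        measurableSet_Ioc
    have hIoc2 : IntegrableOn g (Set.Ioc A 1) volume := by
      have hbase : IntervalIntegrable (fun t : ℝ => t ^ (-γ⁻¹)) volume A 1 :=
        intervalIntegral.intervalIntegrable_rpow' (by linarith)
      have hbase2 : IntegrableOn (fun t : ℝ => t ^ (-γ⁻¹)) (Set.Ioc A 1) volume :=
        (intervalIntegrable_iff_integrableOn_Ioc_of_le hA1.le).1 hbase
      refine IntegrableOn.congr_fun (hbase2.const_mul a) (fun t ht => ?_) measurableSet_Ioc
      simp only [hg]; rw [if_neg (not_le.2 ht.1), if_pos ht.2]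
    have hIoi1 : IntegrableOn g (Set.Ioi (1:ℝ)) volume := by
      refine integrableOn_zero.congr_fun (fun t ht => ?_) measurableSet_Ioi
      have ht' : (1:ℝ) < t := ht
      simp only [hg]
      rw [if_neg (by linarith), if_neg (by linarith)]
    have hd1 : Disjoint (Set.Ioc (0:ℝ) A) (Set.Ioc A 1 ∪ Set.Ioi 1) := by
      rw [Set.Ioc_union_Ioi_eq_Ioi hA1.le]
      exact Set.Ioc_disjoint_Ioi le_rfl
    have hd2 : Disjoint (Set.Ioc A (1:ℝ)) (Set.Ioi 1) := Set.Ioc_disjoint_Ioi le_rfl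
    have hsplit : Set.Ioi (0:ℝ) = Set.Ioc 0 A ∪ (Set.Ioc A 1 ∪ Set.Ioi 1) := by
      rw [Set.Ioc_union_Ioi_eq_Ioi hA1.le, Set.Ioc_union_Ioi_eq_Ioi hA0.le]
    have e1 : ∫ t in Set.Ioc (0:ℝ) A, g t = A := by
      have he : Set.EqOn g (fun _ : ℝ => (1:ℝ)) (Set.Ioc 0 A) := fun t ht => by
        simp only [hg]; rw [if_pos ht.2]
      rw [setIntegral_congr_fun measurableSet_Ioc he, setIntegral_const, Real.volume_real_Ioc,
        smul_eq_mul, mul_one, max_eq_left (by linarith), sub_zero]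
    have e2 : ∫ t in Set.Ioc A (1:ℝ), g t
        = a * ((1 - A ^ (-γ⁻¹ + 1)) / (-γ⁻¹ + 1)) := by
      have he : Set.EqOn g (fun t : ℝ => a * t ^ (-γ⁻¹)) (Set.Ioc A 1) := fun t ht => by
        simp only [hg]; rw [if_neg (not_le.2 ht.1), if_pos ht.2]
      rw [setIntegral_congr_fun measurableSet_Ioc he, MeasureTheory.integral_const_mul]
      congr 1
      rw [← intervalIntegral.integral_of_le hA1.le,
        integral_rpow (Or.inl (by linarith)), Real.one_rpow]
    have e3 : ∫ t in Set.Ioi (1:ℝ), g t = 0 := by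
      have he : Set.EqOn g (fun _ : ℝ => (0:ℝ)) (Set.Ioi 1) := fun t ht => by
        have ht' : (1:ℝ) < t := ht
        simp only [hg]; rw [if_neg (by linarith), if_neg (by linarith)]
      rw [setIntegral_congr_fun measurableSet_Ioi he, integral_zero]
    have hint : ∫ t in Set.Ioi (0:ℝ), g t
        = A + (a * ((1 - A ^ (-γ⁻¹ + 1)) / (-γ⁻¹ + 1)) + 0) := by
      rw [hsplit, setIntegral_union hd1 (measurableSet_Ioc.union measurableSet_Ioi)
        hIoc1 (hIoc2.union hIoi1), setIntegral_union hd2 measurableSet_Ioi hIoc2 hIoi1,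
        e1, e2, e3]
    rw [hLHS, hlayer, hcongrg, hint]
    have hbase : wi * wj * 2 ^ d / (μ * (k:ℝ)) = a := by rw [ha, hc]; ring
    rw [hbase]
    have hAr : A ^ (-γ⁻¹ + 1) = a ^ (γ - 1) := by
      rw [hA, ← Real.rpow_mul ha0.le]
      congr 1
      field_simp
      ring
    have hone : C1 d γ / (1 + C1 d γ) * c = (1 + C1 d γ)⁻¹ * ((1 + (γ-1)⁻¹) * a) := by
      rw [div_eq_mul_inv, C1, ha]; ring
    rw [hone, hAr]
    have haA : a * a ^ (γ - 1) = A := by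
      have h := (Real.rpow_add ha0 1 (γ - 1)).symm
      rw [Real.rpow_one] at h
      rw [hA, h]
      congr 1
      ring
    have hne2 : -γ⁻¹ + 1 ≠ 0 := by
      have hpos2 : 0 < -γ⁻¹ + 1 := by rw [neg_add_eq_sub]; exact sub_pos.2 hinv1
      exact ne_of_gt hpos2
    have hinner_eq : A + (a * ((1 - a ^ (γ-1)) / (-γ⁻¹ + 1)) + 0)
        - (1 + (γ-1)⁻¹) * a = -(A * (γ-1)⁻¹) := by
      rw [← haA]
      generalize a ^ (γ - 1) = u
      have hγ1ne : γ - 1 ≠ 0 := ne_of_gt hγm1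
      have hγ1ne' : -1 + γ ≠ 0 := by rw [neg_add_eq_sub]; exact ne_of_gt hγm1
      field_simp
      ring
    have hgoal_eq : (1 + C1 d γ)⁻¹ * (A + (a * ((1 - a ^ (γ-1)) / (-γ⁻¹ + 1)) + 0))
        - (1 + C1 d γ)⁻¹ * ((1 + (γ-1)⁻¹) * a)
        = -((1 + C1 d γ)⁻¹ * (A * (γ-1)⁻¹)) := by
      calc (1 + C1 d γ)⁻¹ * (A + (a * ((1 - a ^ (γ-1)) / (-γ⁻¹ + 1)) + 0))
          - (1 + C1 d γ)⁻¹ * ((1 + (γ-1)⁻¹) * a)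
          = (1 + C1 d γ)⁻¹ * (A + (a * ((1 - a ^ (γ-1)) / (-γ⁻¹ + 1)) + 0)
              - (1 + (γ-1)⁻¹) * a) := by ring
        _ = (1 + C1 d γ)⁻¹ * (-(A * (γ-1)⁻¹)) := by rw [hinner_eq]
        _ = -((1 + C1 d γ)⁻¹ * (A * (γ-1)⁻¹)) := by ring
    rw [hgoal_eq, abs_neg,
      abs_of_nonneg (mul_nonneg hκ0.le (mul_nonneg hA0.le (inv_nonneg.2 hγm1.le)))]
    calc (1 + C1 d γ)⁻¹ * (A * (γ-1)⁻¹) ≤ 1 * (A * (γ-1)⁻¹) :=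
          mul_le_mul_of_nonneg_right hκ1 (mul_nonneg hA0.le (inv_nonneg.2 hγm1.le))
      _ = (γ-1)⁻¹ * A := by ring
      _ = (γ-1)⁻¹ * a ^ γ := by rw [hA]
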